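/- The 5-dimensional nilpotent commutative associative algebra A₀₃ does not degenerate to A₀₅: the structure λ of A₀₅ does NOT lie in the closure of the GL(5,ℂ)-orbit O(μ) of the structure μ of A₀₃ (closure in the standard topology on the space of bilinear maps ℂ⁵ × ℂ⁵ → ℂ⁵). -/

import Mathlib

open ContinuousLinearMap

/-- The underlying space `ℂⁿ`. -/
abbrev Vn (n : ℕ) := Fin n → ℂ

/-- The space of bilinear maps `ℂⁿ × ℂⁿ → ℂⁿ` (as continuous linear maps in two
arguments), carrying its standard topology as a finite-dimensional complex vector space. -/
abbrev Bil (n : ℕ) := Vn n →L[ℂ] Vn n →L[ℂ] Vn n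

/-- The action of `GL(n, ℂ)` on bilinear maps: `(g · μ)(x, y) = g (μ (g⁻¹ x) (g⁻¹ y))`. -/
noncomputable def act {n : ℕ} (g : Vn n ≃L[ℂ] Vn n) (μ : Bil n) : Bil n :=
  ((compL ℂ (Vn n) (Vn n) (Vn n)).flip (g.symm : Vn n →L[ℂ] Vn n)).comp
    (((compL ℂ (Vn n) (Vn n) (Vn n)) (g : Vn n →L[ℂ] Vn n)).comp
      (μ.comp (g.symm : Vn n →L[ℂ] Vn n)))

@[simp] lemma act_apply {n : ℕ} (g : Vn n ≃L[ℂ] Vn n) (μ : Bil n) (x y : Vn n) :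
    act g μ x y = g (μ (g.symm x) (g.symm y)) := rfl

/-- The orbit `O(μ)` of a bilinear map under the `GL(n, ℂ)`-action. -/
noncomputable def orbit {n : ℕ} (μ : Bil n) : Set (Bil n) :=
  {ν | ∃ g : Vn n ≃L[ℂ] Vn n, ν = act g μ}

/-- The standard basis `e₁, …, e₅` of `ℂ⁵` (zero-indexed: `e i` is `e_{i+1}`). -/
def e (i : Fin 5) : Vn 5 := Pi.single i 1

/-- Multiplication table of the algebra `𝐀03` (entry `(i, j)` is `eᵢ · eⱼ`). -/
def tblA03 : Fin 5 → Fin 5 → Vn 5 :=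
  ![![e 2, 0, e 4, 0, 0],
   ![0, e 3, 0, e 4, 0],
   ![e 4, 0, 0, 0, 0],
   ![0, e 4, 0, 0, 0],
   ![0, 0, 0, 0, 0]]

/-- Multiplication table of the algebra `𝐀05` (entry `(i, j)` is `eᵢ · eⱼ`). -/
def tblA05 : Fin 5 → Fin 5 → Vn 5 :=
  ![![e 1, e 2, e 3, 0, 0],
   ![e 2, e 3, 0, 0, 0],
   ![e 3, 0, 0, 0, 0],
   ![0, 0, 0, 0, 0],
   ![0, 0, 0, 0, 0]]

/-!
The condition `dim A³ ≤ 1` on the span `A³` of all products `(xy)z` is closed and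
`GL`-invariant, so it passes from an orbit to its closure. In `𝐀03` every `(xy)z` is a multiple
of `e₅`, while in `𝐀05` the products `(e₁e₁)e₁ = e₃` and `(e₁e₂)e₁ = e₄` are independent.
-/

/-- `dim A³ ≤ 1`, expressed by the vanishing of all `2 × 2` minors of the products `(xy)z` so
that it is visibly a closed condition. -/
def CubeCollinear {n : ℕ} (ν : Bil n) : Prop :=
  ∀ x y z u v w : Vn n, ∀ i j : Fin n,
    ν (ν x y) z i * ν (ν u v) w j = ν (ν x y) z j * ν (ν u v) w i

lemma isClosed_setOf_cubeCollinear (n : ℕ) : IsClosed {ν : Bil n | CubeCollinear ν} := by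
  simp only [CubeCollinear, Set.ofPred_forall]
  refine isClosed_iInter fun x => isClosed_iInter fun y => isClosed_iInter fun z =>
    isClosed_iInter fun u => isClosed_iInter fun v => isClosed_iInter fun w =>
    isClosed_iInter fun i => isClosed_iInter fun j => isClosed_eq ?_ ?_ <;> fun_prop

lemma cubeCollinear_of_mem_span {n : ℕ} {ν : Bil n} {v : Vn n}
    (h : ∀ x y z, ν (ν x y) z ∈ ℂ ∙ v) : CubeCollinear ν := by
  intro x y z u v w i j
  obtain ⟨a, ha⟩ := Submodule.mem_span_singleton.mp (h x y z)
  obtain ⟨b, hb⟩ := Submodule.mem_span_singleton.mp (h u v w)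
  rw [← ha, ← hb]
  simp only [Pi.smul_apply, smul_eq_mul]
  ring

lemma act_act_apply {n : ℕ} (g : Vn n ≃L[ℂ] Vn n) (μ : Bil n) (x y z : Vn n) :
    act g μ (act g μ x y) z = g (μ (μ (g.symm x) (g.symm y)) (g.symm z)) := by
  simp only [act_apply, ContinuousLinearEquiv.symm_apply_apply]

lemma act_cube_mem_span {n : ℕ} {μ : Bil n} {v : Vn n} (h : ∀ x y z, μ (μ x y) z ∈ ℂ ∙ v)
    (g : Vn n ≃L[ℂ] Vn n) (x y z : Vn n) : act g μ (act g μ x y) z ∈ ℂ ∙ g v := by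
  obtain ⟨a, ha⟩ := Submodule.mem_span_singleton.mp (h (g.symm x) (g.symm y) (g.symm z))
  exact Submodule.mem_span_singleton.mpr ⟨a, by rw [act_act_apply, ← ha, map_smul]⟩

lemma closure_orbit_subset_cubeCollinear {n : ℕ} {μ : Bil n} {v : Vn n}
    (h : ∀ x y z, μ (μ x y) z ∈ ℂ ∙ v) : closure (orbit μ) ⊆ {ν | CubeCollinear ν} := by
  refine closure_minimal ?_ (isClosed_setOf_cubeCollinear n)
  rintro ν ⟨g, rfl⟩
  exact cubeCollinear_of_mem_span (act_cube_mem_span h g)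

lemma cube_mem_of_basis {n : ℕ} {μ : Bil n} {p : Submodule ℂ (Vn n)}
    (h : ∀ i j k : Fin n, μ (μ (Pi.single i 1) (Pi.single j 1)) (Pi.single k 1) ∈ p)
    (x y z : Vn n) : μ (μ x y) z ∈ p := by
  rw [pi_eq_sum_univ' x, pi_eq_sum_univ' y, pi_eq_sum_univ' z]
  simp only [map_sum, map_smul, sum_apply, smul_apply]
  exact Submodule.sum_mem _ fun i _ => Submodule.smul_mem _ _ <|
    Submodule.sum_mem _ fun j _ => Submodule.smul_mem _ _ <|
    Submodule.sum_mem _ fun k _ => Submodule.smul_mem _ _ (h k j i)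

lemma cube_A03_mem_span {μ : Bil 5} (hμ : ∀ i j : Fin 5, μ (e i) (e j) = tblA03 i j)
    (x y z : Vn 5) : μ (μ x y) z ∈ ℂ ∙ e 4 := by
  refine cube_mem_of_basis (fun i j k => ?_) x y z
  change μ (μ (e i) (e j)) (e k) ∈ ℂ ∙ e 4
  fin_cases i <;> fin_cases j <;> fin_cases k <;>
    simp [hμ, tblA03, Submodule.mem_span_singleton_self]

lemma not_cubeCollinear_A05 {lam : Bil 5} (hlam : ∀ i j : Fin 5, lam (e i) (e j) = tblA05 i j) :
    ¬ CubeCollinear lam := by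
  intro h
  have := h (e 0) (e 0) (e 0) (e 0) (e 1) (e 0) 2 3
  simp only [hlam, tblA05, Matrix.cons_val_zero, Matrix.cons_val_one, Matrix.cons_val_two,
    Matrix.head_cons, Matrix.tail_cons] at this
  simp [e] at this

/-- The $5$-dimensional nilpotent commutative associative algebra `𝐀03` does not degenerate to
`𝐀05`: the structure `λ` of `𝐀05` does NOT lie in the closure of
the `GL(5, ℂ)`-orbit `O(μ)` of the structure `μ` of `𝐀03`. -/
theorem A03_not_deg_A05 (μ lam : Bil 5)
    (hμ : ∀ i j : Fin 5, μ (e i) (e j) = tblA03 i j)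
    (hlam : ∀ i j : Fin 5, lam (e i) (e j) = tblA05 i j) :
    lam ∉ closure (orbit μ) := fun hcl =>
  not_cubeCollinear_A05 hlam (closure_orbit_subset_cubeCollinear (cube_A03_mem_span hμ) hcl)
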